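/- arXiv:1701.02682 — 2 statements merged into one kernel-verified Lean document; each statement's English description precedes it below -/
import Mathlib

section
/- In a state transition system modeling CHR with states given as multisets of user-defined constraints paired with a set of built-in constraints, the transition relation is monotonic: if G ↦* G' then (G ∧ H) ↦* (G' ∧ H) for any additional goal H, where ∧ denotes (multiset) union of the constraints of the states. -/
/-- A CHR rule over user-defined atoms `U` and built-in constraints `B`, given by:
an applicability condition `appl b h` (the matched sub-multiset `h` of user constraints and
the built-in store `b` satisfy the matching/guard condition CT ⊨ ∀(b → ∃x (H = H' ∧ C)));
this condition is monotone in the built-in store, since an implication with a strengthened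
premise still holds (built-ins are only added); applying the rule replaces the matched
constraints `h` by the body user constraints `bodyUd h` and adds the body built-ins
`bodyBi h`. -/
structure CHRRule (U B : Type*) where
  appl : Set B → Multiset U → Prop
  appl_mono : ∀ ⦃b b' : Set B⦄ ⦃h : Multiset U⦄, b ⊆ b' → appl b h → appl b' h
  bodyUd : Multiset U → Multiset U
  bodyBi : Multiset U → Set B

/-- CHR states are pairs (U, B) of a multiset of user-defined atoms and a set of built-in
constraints; one transition step of program `P`. -/
def CHRStep {U B : Type*} [DecidableEq U] (P : Set (CHRRule U B))
    (s t : Multiset U × Set B) : Prop :=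
  ∃ r ∈ P, ∃ h : Multiset U, h ≤ s.1 ∧ r.appl s.2 h ∧
    t = (s.1 - h + r.bodyUd h, s.2 ∪ r.bodyBi h)

namespace CHRStep

variable {U B : Type*} [DecidableEq U] {P : Set (CHRRule U B)}

theorem add_right {s t : Multiset U × Set B} (hst : CHRStep P s t) (H : Multiset U × Set B) :
    CHRStep P (s.1 + H.1, s.2 ∪ H.2) (t.1 + H.1, t.2 ∪ H.2) := by
  obtain ⟨r, hrP, m, hm, happ, rfl⟩ := hst
  refine ⟨r, hrP, m, hm.trans (Multiset.le_add_right _ _),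
    r.appl_mono Set.subset_union_left happ, ?_⟩
  ext1
  · -- `m ≤ s.1` is what lets the truncated subtraction commute with adding `H.1`.
    simp only
    rw [add_right_comm, tsub_add_eq_add_tsub hm]
  · exact Set.union_right_comm _ _ _

end CHRStep

/-- CHR monotonicity: if G ↦* G' then (G ∧ H) ↦* (G' ∧ H) for any
additional goal H, where ∧ is (multiset resp. set) union of the constraints. -/
theorem chr_monotonicity {U B : Type*} [DecidableEq U] (P : Set (CHRRule U B))
    (G G' H : Multiset U × Set B)
    (h : Relation.ReflTransGen (CHRStep P) G G') :
    Relation.ReflTransGen (CHRStep P)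
      (G.1 + H.1, G.2 ∪ H.2) (G'.1 + H.1, G'.2 ∪ H.2) :=
  h.lift (fun s => (s.1 + H.1, s.2 ∪ H.2)) fun _ _ hst => hst.add_right H
end

section
/- Given a recursive rule r and a devil's rule d of r, if the condition NT holds — namely, ∃(C ∧ B_bi) is CT-satisfiable and CT ⊨ ∀((C ∧ B_bi) → ∃(C' ∧ O_{B_ud}=O_{H'} ∧ B'_bi)) — then the maximally vicious computation (H_r ∧ C_r) = S₀ ↦_r T₀ ↦_d S₁ ↦_r T₁ ↦_d ⋯ is infinite (never reaches a failed state). -/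
theorem exists_seq_of_forall_exists_succ {α : Type*} {P : α → Prop} {r : α → α → Prop}
    (h₀ : ∃ a, P a) (hsucc : ∀ a, P a → ∃ b, P b ∧ r a b) :
    ∃ f : ℕ → α, ∀ n, P (f n) ∧ r (f n) (f (n + 1)) := by
  obtain ⟨a, ha⟩ := h₀
  choose! g hg using hsucc
  have hP : ∀ n, P (g^[n] a) := by
    intro n
    induction n with
    | zero => exact ha
    | succ n ih => simpa only [Function.iterate_succ_apply'] using (hg _ ih).1
  refine ⟨fun n => g^[n] a, fun n => ⟨hP n, ?_⟩⟩
  simpa only [Function.iterate_succ_apply'] using (hg _ (hP n)).2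

/-- Given a recursive rule r: H ⇔ C | B_bi ∧ B_ud and a devil's rule
d: O_{B_ud} \ R_{B_ud} ⇔ C ∧ B_bi | C' ∧ O_{B_ud} = O_{H'} ∧ R_{H'} of r, if the
condition NT holds — namely ∃(C ∧ B_bi) is CT-satisfiable and
CT ⊨ ∀((C ∧ B_bi) → ∃(C' ∧ O_{B_ud} = O_{H'} ∧ B'_bi)) — then the maximally vicious
computation (H_r ∧ C_r) = S₀ ↦_r T₀ ↦_d S₁ ↦_r T₁ ↦_d ⋯ is infinite, i.e., never reaches
a failed state.

Semantic rendering: assignments of r's variables are `ρ : X → T`; `C`, `Bbi` are the guard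
and body built-ins of r; `Oud`, `OH` are the denotations of the overlap parts O_{B_ud} of
the body and O_{H'} of the head (a disjoint variant denotes the same function on its own
assignment, so C' and B'_bi are `C` and `Bbi` applied to the fresh assignment).  Along the
alternating computation, the i-th pair of r- and d-steps accumulates the built-in
constraints C(ρᵢ) ∧ B_bi(ρᵢ) ∧ C(ρ_{i+1}) ∧ O_{B_ud}(ρᵢ) = O_{H'}(ρ_{i+1}) for the
successive rule-variable instances ρᵢ.  The conclusion — no state of the computation is
failed, hence by the alternation results the computation is infinite — is that all the
accumulated built-in constraints are simultaneously CT-satisfiable: there is an infinite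
sequence of assignments satisfying every accumulated constraint. -/
theorem NT_condition_implies_nontermination
    {X T A : Type*}
    (Oud OH : (X → T) → A)
    (C Bbi : (X → T) → Prop)
    (hsat : ∃ ρ : X → T, C ρ ∧ Bbi ρ)
    (hNT : ∀ ρ : X → T, C ρ ∧ Bbi ρ →
      ∃ ρ' : X → T, C ρ' ∧ Oud ρ = OH ρ' ∧ Bbi ρ') :
    ∃ ρ : ℕ → (X → T), ∀ i : ℕ,
      C (ρ i) ∧ Bbi (ρ i) ∧ Oud (ρ i) = OH (ρ (i + 1)) := by
  obtain ⟨ρ, hρ⟩ := exists_seq_of_forall_exists_succ (r := fun ρ ρ' => Oud ρ = OH ρ') hsat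
    fun ρ hρ => (hNT ρ hρ).imp fun _ ⟨hC, hO, hB⟩ => ⟨⟨hC, hB⟩, hO⟩
  exact ⟨ρ, fun i => ⟨(hρ i).1.1, (hρ i).1.2, (hρ i).2⟩⟩
end
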